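/- Let (A, ≻, ≺) be a finite-dimensional anti-dendriform algebra and r ∈ A⊗A with r + τ(r) invariant. Then r is a solution of the anti-dendriform Yang-Baxter equation if and only if the operations ζ ≻_r η = -R_·*(T_r(ζ))η - L_≺*(T_{τ(r)}(η))ζ and ζ ≺_r η = R_≻*(T_r(ζ))η + L_·*(T_{τ(r)}(η))ζ make A* into an anti-dendriform algebra such that both T_r and -T_{τ(r)} are anti-dendriform algebra homomorphisms from (A*, ≻_r, ≺_r) to (A, ≻, ≺). -/

import Mathlib

open TensorProduct

set_option synthInstance.maxHeartbeats 1000000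
set_option maxHeartbeats 1600000

variable {K : Type*} [Field K]

/-- The anti-dendriform algebra identities for two bilinear operations `s` (≻) and `p` (≺):
`x≻(y≻z) = -(x·y)≻z = -x≺(y·z) = (x≺y)≺z` and `(x≻y)≺z = x≻(y≺z)`, where `x·y = x≻y + x≺y`. -/
def IsAntiDend {M : Type*} [AddCommGroup M] [Module K M]
    (s p : M →ₗ[K] M →ₗ[K] M) : Prop :=
  ∀ x y z : M,
    s x (s y z) = - s (s x y + p x y) z ∧
    s x (s y z) = - p x (s y z + p y z) ∧
    s x (s y z) = p (p x y) z ∧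
    p (s x y) z = s x (p y z)

/-- The bilinear map `a ⊗ b ↦ (ζ ↦ ζ(a) • b)` used to define `T_r`. -/
noncomputable def Tbil {M : Type*} [AddCommGroup M] [Module K M] :
    M →ₗ[K] M →ₗ[K] (Module.Dual K M →ₗ[K] M) :=
  LinearMap.mk₂ K (fun a b => (Module.Dual.eval K M a).smulRight b)
    (fun a a' b => by ext ζ; simp [add_smul])
    (fun c a b => by
      ext ζ
      simp only [LinearMap.smulRight_apply, LinearMap.smul_apply, map_smul,
        Module.Dual.eval_apply, smul_eq_mul, mul_smul])
    (fun a b b' => by ext ζ; simp)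
    (fun c a b => by
      ext ζ
      simp only [LinearMap.smulRight_apply, LinearMap.smul_apply]
      exact smul_comm _ _ _)

/-- `T_r : A* → A`, `⟨T_r ζ, η⟩ = ⟨r, ζ ⊗ η⟩`; concretely `T_r ζ = Σ ζ(aᵢ) • bᵢ`
for `r = Σ aᵢ ⊗ bᵢ`. -/
noncomputable def TmL {M : Type*} [AddCommGroup M] [Module K M] (r : M ⊗[K] M) :
    Module.Dual K M →ₗ[K] M :=
  TensorProduct.lift Tbil r

/-- The flip `τ : A ⊗ A → A ⊗ A`. -/
noncomputable def tau {M : Type*} [AddCommGroup M] [Module K M] (r : M ⊗[K] M) : M ⊗[K] M :=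
  TensorProduct.comm K M M r

/-- `r` is invariant: `(R_≺(x)⊗I + I⊗L_·(x)) r = 0` and `(R_·(x)⊗I + I⊗L_≻(x)) r = 0`. -/
def Invariant {M : Type*} [AddCommGroup M] [Module K M]
    (s p : M →ₗ[K] M →ₗ[K] M) (r : M ⊗[K] M) : Prop :=
  ∀ x : M,
    TensorProduct.map (p.flip x) (LinearMap.id : M →ₗ[K] M) r
      + TensorProduct.map (LinearMap.id : M →ₗ[K] M) ((s + p) x) r = 0 ∧
    TensorProduct.map ((s + p).flip x) (LinearMap.id : M →ₗ[K] M) r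
      + TensorProduct.map (LinearMap.id : M →ₗ[K] M) (s x) r = 0

/-- `(a⊗b)⊗(c⊗d) ↦ (m a c) ⊗ b ⊗ d` : the product is placed in the first tensor slot,
giving `r₁₂ ∗ r₁₃` when applied to `r ⊗ r`. -/
noncomputable def place1 {M : Type*} [AddCommGroup M] [Module K M]
    (m : M →ₗ[K] M →ₗ[K] M) :
    (M ⊗[K] M) ⊗[K] (M ⊗[K] M) →ₗ[K] M ⊗[K] (M ⊗[K] M) :=
  (TensorProduct.map (TensorProduct.lift m)
      (LinearMap.id : M ⊗[K] M →ₗ[K] M ⊗[K] M)) ∘ₗ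
    (TensorProduct.tensorTensorTensorComm K M M M M).toLinearMap

/-- `(a⊗b)⊗(c⊗d) ↦ c ⊗ (m a d) ⊗ b` : the product in the second slot, giving `r₂₃ ∗ r₁₂`. -/
noncomputable def place2 {M : Type*} [AddCommGroup M] [Module K M]
    (m : M →ₗ[K] M →ₗ[K] M) :
    (M ⊗[K] M) ⊗[K] (M ⊗[K] M) →ₗ[K] M ⊗[K] (M ⊗[K] M) :=
  (TensorProduct.leftComm K M M M).toLinearMap ∘ₗ
  (TensorProduct.map (LinearMap.id : M →ₗ[K] M) (TensorProduct.comm K M M).toLinearMap) ∘ₗ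
  (TensorProduct.map (TensorProduct.lift m)
      (LinearMap.id : M ⊗[K] M →ₗ[K] M ⊗[K] M)) ∘ₗ
  (TensorProduct.tensorTensorTensorComm K M M M M).toLinearMap ∘ₗ
  (TensorProduct.congr (LinearEquiv.refl K (M ⊗[K] M)) (TensorProduct.comm K M M)).toLinearMap

/-- `(a⊗b)⊗(c⊗d) ↦ a ⊗ c ⊗ (m b d)` : the product in the third slot, giving `r₁₃ ∗ r₂₃`. -/
noncomputable def place3 {M : Type*} [AddCommGroup M] [Module K M]
    (m : M →ₗ[K] M →ₗ[K] M) :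
    (M ⊗[K] M) ⊗[K] (M ⊗[K] M) →ₗ[K] M ⊗[K] (M ⊗[K] M) :=
  (TensorProduct.assoc K M M M).toLinearMap ∘ₗ
  (TensorProduct.map (LinearMap.id : M ⊗[K] M →ₗ[K] M ⊗[K] M) (TensorProduct.lift m)) ∘ₗ
  (TensorProduct.tensorTensorTensorComm K M M M M).toLinearMap

/-- `D(r) = r₁₂·r₁₃ + r₂₃≻r₁₂ - r₁₃≺r₂₃`. -/
noncomputable def adD {M : Type*} [AddCommGroup M] [Module K M]
    (s p : M →ₗ[K] M →ₗ[K] M) (r : M ⊗[K] M) : M ⊗[K] (M ⊗[K] M) :=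
  place1 (s + p) (r ⊗ₜ[K] r) + place2 s (r ⊗ₜ[K] r) - place3 p (r ⊗ₜ[K] r)

/-- `D₁(r) = r₂₃·r₁₂ + r₁₃≻r₂₃ + r₁₂≺r₁₃`. -/
noncomputable def adD1 {M : Type*} [AddCommGroup M] [Module K M]
    (s p : M →ₗ[K] M →ₗ[K] M) (r : M ⊗[K] M) : M ⊗[K] (M ⊗[K] M) :=
  place2 (s + p) (r ⊗ₜ[K] r) + place3 s (r ⊗ₜ[K] r) + place1 p (r ⊗ₜ[K] r)

/-- `D₂(r) = r₁₃·r₂₃ - r₁₂≻r₁₃ + r₂₃≺r₁₂`. -/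
noncomputable def adD2 {M : Type*} [AddCommGroup M] [Module K M]
    (s p : M →ₗ[K] M →ₗ[K] M) (r : M ⊗[K] M) : M ⊗[K] (M ⊗[K] M) :=
  place3 (s + p) (r ⊗ₜ[K] r) - place1 s (r ⊗ₜ[K] r) + place2 p (r ⊗ₜ[K] r)

/-- The anti-dendriform Yang-Baxter equation `D(r) = 0`. -/
noncomputable def AYBE {M : Type*} [AddCommGroup M] [Module K M]
    (s p : M →ₗ[K] M →ₗ[K] M) (r : M ⊗[K] M) : Prop :=
  adD s p r = 0

/-- `x ↦ R_m(x)* = (y ↦ m y x)*` on the dual space. -/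
noncomputable def RstarOp {M : Type*} [AddCommGroup M] [Module K M]
    (m : M →ₗ[K] M →ₗ[K] M) :
    M →ₗ[K] (Module.Dual K M →ₗ[K] Module.Dual K M) :=
  Module.Dual.transpose ∘ₗ m.flip

/-- `x ↦ L_m(x)* = (y ↦ m x y)*` on the dual space. -/
noncomputable def LstarOp {M : Type*} [AddCommGroup M] [Module K M]
    (m : M →ₗ[K] M →ₗ[K] M) :
    M →ₗ[K] (Module.Dual K M →ₗ[K] Module.Dual K M) :=
  Module.Dual.transpose ∘ₗ m

/-- `ζ ≻_r η = -R_·*(T_r ζ) η - L_≺*(T_{τ(r)} η) ζ`. -/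
noncomputable def succR {M : Type*} [AddCommGroup M] [Module K M]
    (s p : M →ₗ[K] M →ₗ[K] M) (r : M ⊗[K] M) :
    Module.Dual K M →ₗ[K] Module.Dual K M →ₗ[K] Module.Dual K M :=
  (RstarOp (s + p) ∘ₗ (- TmL r)) + (LstarOp p ∘ₗ (- TmL (tau r))).flip

/-- `ζ ≺_r η = R_≻*(T_r ζ) η + L_·*(T_{τ(r)} η) ζ`. -/
noncomputable def precR {M : Type*} [AddCommGroup M] [Module K M]
    (s p : M →ₗ[K] M →ₗ[K] M) (r : M ⊗[K] M) :
    Module.Dual K M →ₗ[K] Module.Dual K M →ₗ[K] Module.Dual K M :=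
  (RstarOp s ∘ₗ TmL r) + (LstarOp (s + p) ∘ₗ TmL (tau r)).flip

/-! Pairing `D(r)` with `ζ ⊗ η ⊗ θ` gives `⟨T_r(ζ ≺_r η) - T_r ζ ≺ T_r η, θ⟩`, so in finite
dimension the AD-YBE says exactly that `T_r` preserves `≺`. Since `T_{τ(r)}` is the transpose of
`T_r`, the invariance of `r + τ(r)` lets one move the factors of this scalar identity between the
three slots, which yields the other three homomorphism identities. Once `T_r` and `-T_{τ(r)}`
are homomorphisms, each anti-dendriform identity of `(A*, ≻_r, ≺_r)`, evaluated at `x ∈ A`,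
is a linear combination of anti-dendriform identities of `A`. -/
section

variable {M : Type*} [AddCommGroup M] [Module K M]

@[simp]
lemma TmL_tmul (a b : M) (ζ : Module.Dual K M) : TmL (a ⊗ₜ[K] b) ζ = ζ a • b := by
  simp [TmL, Tbil]

@[simp]
lemma TmL_add (u v : M ⊗[K] M) : TmL (u + v) = TmL u + TmL v :=
  map_add _ u v

@[simp]
lemma tau_tmul (a b : M) : tau (a ⊗ₜ[K] b) = b ⊗ₜ[K] a := rfl

@[simp]
lemma tau_add (u v : M ⊗[K] M) : tau (u + v) = tau u + tau v :=
  map_add _ u v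

@[simp]
lemma tau_tau (u : M ⊗[K] M) : tau (tau u) = u :=
  comm_comm K M M u

lemma apply_TmL (u : M ⊗[K] M) (ζ θ : Module.Dual K M) :
    θ (TmL u ζ) = ζ (TmL (tau u) θ) := by
  induction u using TensorProduct.induction_on with
  | zero => simp [TmL, tau]
  | tmul a b => simp [mul_comm]
  | add u v hu hv => simp [hu, hv]

lemma dualDistrib_apply_eq_apply_TmL (ζ η : Module.Dual K M) (u : M ⊗[K] M) :
    dualDistrib K M M (ζ ⊗ₜ η) u = η (TmL u ζ) := by
  induction u using TensorProduct.induction_on with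
  | zero => simp [TmL]
  | tmul a b => simp
  | add u v hu hv => simp [hu, hv]

lemma dualDistrib_map_apply (ζ η : Module.Dual K M) (f g : M →ₗ[K] M) (u : M ⊗[K] M) :
    dualDistrib K M M (ζ ⊗ₜ η) (map f g u) = dualDistrib K M M ((ζ ∘ₗ f) ⊗ₜ (η ∘ₗ g)) u := by
  induction u using TensorProduct.induction_on with
  | zero => simp
  | tmul a b => simp
  | add u v hu hv => simp [hu, hv]

lemma dualDistrib_map_flip_add_map_apply (m n : M →ₗ[K] M →ₗ[K] M) (x : M) (w : M ⊗[K] M)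
    (ζ η : Module.Dual K M) :
    dualDistrib K M M (ζ ⊗ₜ η) (map (m.flip x) LinearMap.id w + map LinearMap.id (n x) w) =
      ζ (m (TmL (tau w) η) x) + η (n x (TmL w ζ)) := by
  rw [map_add, dualDistrib_map_apply, dualDistrib_map_apply, dualDistrib_apply_eq_apply_TmL,
    dualDistrib_apply_eq_apply_TmL, LinearMap.comp_id, LinearMap.comp_id, apply_TmL w (ζ ∘ₗ _)]
  simp

section

variable {s p : M →ₗ[K] M →ₗ[K] M} {w : M ⊗[K] M}

lemma Invariant.apply_TmL_left (hw : Invariant s p w) (x : M) (ζ η : Module.Dual K M) :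
    ζ (p (TmL (tau w) η) x) + η ((s + p) x (TmL w ζ)) = 0 := by
  rw [← dualDistrib_map_flip_add_map_apply, (hw x).1, map_zero]

lemma Invariant.apply_TmL_right (hw : Invariant s p w) (x : M) (ζ η : Module.Dual K M) :
    ζ ((s + p) (TmL (tau w) η) x) + η (s x (TmL w ζ)) = 0 := by
  rw [← dualDistrib_map_flip_add_map_apply, (hw x).2, map_zero]

end

noncomputable def dualTriple (ζ η θ : Module.Dual K M) : Module.Dual K (M ⊗[K] (M ⊗[K] M)) :=
  dualDistrib K M (M ⊗[K] M) (ζ ⊗ₜ dualDistrib K M M (η ⊗ₜ θ))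

@[simp]
lemma dualTriple_tmul (ζ η θ : Module.Dual K M) (a b c : M) :
    dualTriple ζ η θ (a ⊗ₜ[K] (b ⊗ₜ[K] c)) = ζ a * (η b * θ c) := rfl

lemma dualTriple_place1_tmul (m : M →ₗ[K] M →ₗ[K] M) (u v : M ⊗[K] M)
    (ζ η θ : Module.Dual K M) :
    dualTriple ζ η θ (place1 m (u ⊗ₜ v)) = ζ (m (TmL (tau u) η) (TmL (tau v) θ)) := by
  induction u using TensorProduct.induction_on with
  | zero => simp [TmL, tau]
  | tmul a b =>
    induction v using TensorProduct.induction_on with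
    | zero => simp [TmL, tau]
    | tmul c d => simp [place1]; ring
    | add v v' hv hv' => simp [tmul_add, hv, hv']
  | add u u' hu hu' => simp [add_tmul, hu, hu']

lemma dualTriple_place2_tmul (m : M →ₗ[K] M →ₗ[K] M) (u v : M ⊗[K] M)
    (ζ η θ : Module.Dual K M) :
    dualTriple ζ η θ (place2 m (u ⊗ₜ v)) = η (m (TmL (tau u) θ) (TmL v ζ)) := by
  induction u using TensorProduct.induction_on with
  | zero => simp [TmL, tau]
  | tmul a b =>
    induction v using TensorProduct.induction_on with
    | zero => simp [TmL, tau]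
    | tmul c d => simp [place2, mul_comm]
    | add v v' hv hv' => simp [tmul_add, hv, hv']
  | add u u' hu hu' => simp [add_tmul, hu, hu']

lemma dualTriple_place3_tmul (m : M →ₗ[K] M →ₗ[K] M) (u v : M ⊗[K] M)
    (ζ η θ : Module.Dual K M) :
    dualTriple ζ η θ (place3 m (u ⊗ₜ v)) = θ (m (TmL u ζ) (TmL v η)) := by
  induction u using TensorProduct.induction_on with
  | zero => simp [TmL]
  | tmul a b =>
    induction v using TensorProduct.induction_on with
    | zero => simp [TmL]
    | tmul c d => simp [place3]; ring
    | add v v' hv hv' => simp [tmul_add, hv, hv']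
  | add u u' hu hu' => simp [add_tmul, hu, hu']

lemma eq_zero_of_forall_dualTriple_apply_eq_zero [Module.Finite K M] {z : M ⊗[K] (M ⊗[K] M)}
    (hz : ∀ ζ η θ : Module.Dual K M, dualTriple ζ η θ z = 0) : z = 0 := by
  rw [← Module.forall_dual_apply_eq_zero_iff K z]
  intro Φ
  obtain ⟨t, rfl⟩ := (dualDistribEquiv K M (M ⊗[K] M)).surjective Φ
  induction t using TensorProduct.induction_on with
  | zero => simp
  | tmul ζ ψ =>
    obtain ⟨t, rfl⟩ := (dualDistribEquiv K M M).surjective ψ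
    induction t using TensorProduct.induction_on with
    | zero => simp
    | tmul η θ => exact hz ζ η θ
    | add t t' ht ht' => simp_all [tmul_add]
  | add t t' ht ht' => simp_all

section

variable (s p : M →ₗ[K] M →ₗ[K] M) (r : M ⊗[K] M)

lemma succR_apply (ζ η : Module.Dual K M) (x : M) :
    succR s p r ζ η x = - η ((s + p) x (TmL r ζ)) - ζ (p (TmL (tau r) η) x) := by
  simp [succR, RstarOp, LstarOp, Module.Dual.transpose_apply]
  ring

lemma precR_apply (ζ η : Module.Dual K M) (x : M) :
    precR s p r ζ η x = η (s x (TmL r ζ)) + ζ ((s + p) (TmL (tau r) η) x) := by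
  simp [precR, RstarOp, LstarOp, Module.Dual.transpose_apply]

lemma dualTriple_adD (ζ η θ : Module.Dual K M) :
    dualTriple ζ η θ (adD s p r) =
      η (s (TmL (tau r) θ) (TmL r ζ)) + ζ ((s + p) (TmL (tau r) η) (TmL (tau r) θ))
        - θ (p (TmL r ζ) (TmL r η)) := by
  rw [adD, map_sub, map_add, dualTriple_place1_tmul, dualTriple_place2_tmul,
    dualTriple_place3_tmul, add_comm (ζ _)]

variable [Module.Finite K M]

lemma AYBE_iff : AYBE s p r ↔ ∀ ζ η θ : Module.Dual K M,
    η (s (TmL (tau r) θ) (TmL r ζ)) + ζ ((s + p) (TmL (tau r) η) (TmL (tau r) θ)) =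
      θ (p (TmL r ζ) (TmL r η)) := by
  refine ⟨fun h ζ η θ => ?_, fun h => ?_⟩
  · rw [← sub_eq_zero, ← dualTriple_adD, show adD s p r = 0 from h, map_zero]
  · exact eq_zero_of_forall_dualTriple_apply_eq_zero fun ζ η θ => by
      rw [dualTriple_adD, h, sub_self]

lemma forall_TmL_precR_iff_AYBE : (∀ ζ η : Module.Dual K M,
    TmL r (precR s p r ζ η) = p (TmL r ζ) (TmL r η)) ↔ AYBE s p r := by
  rw [AYBE_iff]
  refine forall₂_congr fun ζ η => ?_
  rw [← (Module.eval_apply_injective K).eq_iff, LinearMap.ext_iff]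
  simp only [Module.Dual.eval_apply, apply_TmL r, precR_apply]

end

variable {s p : M →ₗ[K] M →ₗ[K] M} {r : M ⊗[K] M}

namespace AYBE

variable [Module.Finite K M]

lemma TmL_precR (hY : AYBE s p r) (ζ η : Module.Dual K M) :
    TmL r (precR s p r ζ η) = p (TmL r ζ) (TmL r η) :=
  (forall_TmL_precR_iff_AYBE s p r).mpr hY ζ η

lemma TmL_succR (hY : AYBE s p r) (hinv : Invariant s p (r + tau r)) (ζ η : Module.Dual K M) :
    TmL r (succR s p r ζ η) = s (TmL r ζ) (TmL r η) := by
  have Y := (AYBE_iff s p r).mp hY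
  have I₁ := hinv.apply_TmL_left
  have I₂ := hinv.apply_TmL_right
  apply Module.eval_apply_injective K
  ext θ
  simp only [Module.Dual.eval_apply, apply_TmL r, succR_apply, tau_add, tau_tau, TmL_add,
    LinearMap.add_apply, map_add] at Y I₁ I₂ ⊢
  linear_combination (- I₁ (TmL (tau r) θ) ζ η) + Y η θ ζ - I₂ (TmL r η) θ ζ + I₁ (TmL r η) θ ζ

lemma TmL_tau_precR (hY : AYBE s p r) (hinv : Invariant s p (r + tau r))
    (ζ η : Module.Dual K M) :
    TmL (tau r) (precR s p r ζ η) = - p (TmL (tau r) ζ) (TmL (tau r) η) := by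
  have Y := (AYBE_iff s p r).mp hY
  have I₁ := hinv.apply_TmL_left
  have I₂ := hinv.apply_TmL_right
  apply Module.eval_apply_injective K
  ext θ
  simp only [Module.Dual.eval_apply, apply_TmL (tau r), tau_tau, precR_apply, tau_add, TmL_add,
    LinearMap.add_apply, map_add, map_neg, LinearMap.neg_apply] at Y I₁ I₂ ⊢
  linear_combination I₁ (TmL (tau r) η) θ ζ + I₂ (TmL r ζ) η θ - I₁ (TmL r ζ) η θ - Y ζ η θ

lemma TmL_tau_succR (hY : AYBE s p r) (hinv : Invariant s p (r + tau r))
    (ζ η : Module.Dual K M) :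
    TmL (tau r) (succR s p r ζ η) = - s (TmL (tau r) ζ) (TmL (tau r) η) := by
  have Y := (AYBE_iff s p r).mp hY
  have I₁ := hinv.apply_TmL_left
  have I₂ := hinv.apply_TmL_right
  apply Module.eval_apply_injective K
  ext θ
  simp only [Module.Dual.eval_apply, apply_TmL (tau r), tau_tau, succR_apply, tau_add, TmL_add,
    LinearMap.add_apply, map_add, map_neg, LinearMap.neg_apply] at Y I₁ I₂ ⊢
  linear_combination I₁ (TmL (tau r) θ) ζ η - Y η θ ζ + I₂ (TmL r η) θ ζ - I₁ (TmL r η) θ ζ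
    + I₂ (TmL (tau r) η) θ ζ - I₁ (TmL (tau r) η) θ ζ - I₂ (TmL r ζ) η θ

end AYBE

lemma IsAntiDend.succR_precR (h : IsAntiDend s p)
    (h₁ : ∀ ζ η, TmL r (succR s p r ζ η) = s (TmL r ζ) (TmL r η))
    (h₂ : ∀ ζ η, TmL r (precR s p r ζ η) = p (TmL r ζ) (TmL r η))
    (h₃ : ∀ ζ η, TmL (tau r) (succR s p r ζ η) = - s (TmL (tau r) ζ) (TmL (tau r) η))
    (h₄ : ∀ ζ η, TmL (tau r) (precR s p r ζ η) = - p (TmL (tau r) ζ) (TmL (tau r) η)) :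
    IsAntiDend (succR s p r) (precR s p r) := by
  have H₁ (φ : Module.Dual K M) (a b c : M) :
      φ (s a (s b c)) + φ (s (s a b) c) + φ (s (p a b) c) = 0 := by
    rw [(h a b c).1]; simp
  have H₂ (φ : Module.Dual K M) (a b c : M) :
      φ (s a (s b c)) + φ (p a (s b c)) + φ (p a (p b c)) = 0 := by
    rw [(h a b c).2.1]; simp
  have H₃ (φ : Module.Dual K M) (a b c : M) : φ (s a (s b c)) = φ (p (p a b) c) :=
    congrArg φ (h a b c).2.2.1
  have H₄ (φ : Module.Dual K M) (a b c : M) : φ (p (s a b) c) = φ (s a (p b c)) :=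
    congrArg φ (h a b c).2.2.2
  intro ζ η θ
  refine ⟨?_, ?_, ?_, ?_⟩ <;> ext x <;>
    simp only [map_add, map_neg, LinearMap.add_apply, LinearMap.neg_apply,
      succR_apply, precR_apply, h₁, h₂, h₃, h₄]
  · linear_combination H₁ θ x (TmL r ζ) (TmL r η) + H₄ θ x (TmL r ζ) (TmL r η)
      - H₃ θ x (TmL r ζ) (TmL r η) - H₂ θ x (TmL r ζ) (TmL r η)
      + H₂ η (TmL (tau r) θ) x (TmL r ζ) - H₃ η (TmL (tau r) θ) x (TmL r ζ)
      + H₄ ζ (TmL (tau r) η) (TmL (tau r) θ) x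
  · linear_combination H₁ θ x (TmL r ζ) (TmL r η) - H₃ θ x (TmL r ζ) (TmL r η)
      + H₂ η (TmL (tau r) θ) x (TmL r ζ)
      - H₁ ζ (TmL (tau r) η) (TmL (tau r) θ) x + H₃ ζ (TmL (tau r) η) (TmL (tau r) θ) x
  · linear_combination H₁ θ x (TmL r ζ) (TmL r η) + H₄ θ x (TmL r ζ) (TmL r η)
      - H₃ θ x (TmL r ζ) (TmL r η)
      + H₂ η (TmL (tau r) θ) x (TmL r ζ) - H₁ η (TmL (tau r) θ) x (TmL r ζ)
      + H₄ ζ (TmL (tau r) η) (TmL (tau r) θ) x - H₂ ζ (TmL (tau r) η) (TmL (tau r) θ) x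
  · linear_combination H₁ θ x (TmL r ζ) (TmL r η)
      - H₁ η (TmL (tau r) θ) x (TmL r ζ) - H₄ η (TmL (tau r) θ) x (TmL r ζ)
      + H₃ η (TmL (tau r) θ) x (TmL r ζ) + H₂ η (TmL (tau r) θ) x (TmL r ζ)
      - H₂ ζ (TmL (tau r) η) (TmL (tau r) θ) x + H₃ ζ (TmL (tau r) η) (TmL (tau r) θ) x

end

variable {A : Type*} [AddCommGroup A] [Module K A]

/-- with `r + τ(r)` invariant, `r` solves the AD-YBE iff
`(A*, ≻_r, ≺_r)` is an anti-dendriform algebra and both `T_r` and `-T_{τ(r)}` are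
anti-dendriform algebra homomorphisms from `(A*, ≻_r, ≺_r)` to `(A, ≻, ≺)`. -/
theorem stmt11 [FiniteDimensional K A]
    (s p : A →ₗ[K] A →ₗ[K] A) (h : IsAntiDend s p) (r : A ⊗[K] A)
    (hinv : Invariant s p (r + tau r)) :
    AYBE s p r ↔
      (IsAntiDend (succR s p r) (precR s p r) ∧
        (∀ ζ η : Module.Dual K A,
          TmL r (succR s p r ζ η) = s (TmL r ζ) (TmL r η) ∧
          TmL r (precR s p r ζ η) = p (TmL r ζ) (TmL r η)) ∧
        (∀ ζ η : Module.Dual K A,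
          - TmL (tau r) (succR s p r ζ η) = s (- TmL (tau r) ζ) (- TmL (tau r) η) ∧
          - TmL (tau r) (precR s p r ζ η) = p (- TmL (tau r) ζ) (- TmL (tau r) η))) := by
  refine ⟨fun hY => ?_, fun ⟨_, hT, _⟩ => (forall_TmL_precR_iff_AYBE s p r).mp (hT · · |>.2)⟩
  have h₁ := hY.TmL_succR hinv
  have h₃ := hY.TmL_tau_succR hinv
  have h₄ := hY.TmL_tau_precR hinv
  refine ⟨h.succR_precR h₁ hY.TmL_precR h₃ h₄, fun ζ η => ⟨h₁ ζ η, hY.TmL_precR ζ η⟩,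
    fun ζ η => ⟨?_, ?_⟩⟩ <;> simp [h₃, h₄]
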